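/- Let B ⊆ P be a Hopf-Galois H-extension with B central in P, and endow P with the action p·h = (S⁻¹(h))^[2] p (S⁻¹(h))^[1]. Then P is stable: p⁽⁰⁾·p⁽¹⁾ = p for all p ∈ P. -/

import Mathlib

/-!
Write `T(h) = h^[1] ⊗_B h^[2] = can⁻¹(1 ⊗ h)` and `m(x ⊗_B y) = y x`. As `can` is right
`P`-linear, `T(S⁻¹h) (1 ⊗ q) = can⁻¹((1 ⊗ S⁻¹h) ρ(q))`, and as `B` is central,
`q · h = m(T(S⁻¹h) (1 ⊗ q))`. By coassociativity `(1 ⊗ S⁻¹p₍₁₎) ρ(p₍₀₎)` is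
`p₍₀₎ ⊗ S⁻¹(p₍₂₎) p₍₁₎`, which is `p ⊗ 1 = can(p ⊗ 1)` because applying `S` to
`S⁻¹(h₍₂₎) h₍₁₎` gives `S(h₍₁₎) h₍₂₎ = ε(h)`. Hence `p₍₀₎ · p₍₁₎ = m(p ⊗ 1) = p`.
-/

open TensorProduct LinearMap Coalgebra

noncomputable section

variable (k : Type) [Field k] (H : Type) [Ring H] [HopfAlgebra k H]
-- `P` is a `k`-algebra and `B` (the coinvariants) is a commutative `k`-algebra
-- mapping centrally into `P` (`Algebra B P` encodes that `B` is central in `P`)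
variable (P : Type) [Ring P] [Algebra k P]
variable (B : Type) [CommRing B] [Algebra k B] [Algebra B P] [IsScalarTower k B P]

/-- For fixed `p`, the map `x ⊗_B y ↦ y·p·x` on `P ⊗_B P`; its well-definedness
uses that `B` is central in `P`. -/
def sandwichMap (p : P) : P ⊗[B] P →ₗ[B] P :=
  TensorProduct.lift (LinearMap.mk₂ B (fun x y => y * (p * x))
    (fun x x' y => by simp [mul_add])
    (fun b x y => by simp only [mul_smul_comm])
    (fun x y y' => by simp [add_mul])
    (fun b x y => by simp only [smul_mul_assoc]))

namespace HopfAlgebra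

variable {R A : Type*} [CommSemiring R] [Semiring A] [HopfAlgebra R A]

theorem mul'_comp_map_comp_comm_comp_comul_of_antipode_inverse (Sinv : A →ₗ[R] A)
    (hSinv1 : Sinv ∘ₗ antipode R = LinearMap.id)
    (hSinv2 : antipode R ∘ₗ Sinv = LinearMap.id) :
    mul' R A ∘ₗ map Sinv LinearMap.id ∘ₗ (TensorProduct.comm R A A).toLinearMap ∘ₗ comul
      = Algebra.linearMap R A ∘ₗ counit := by
  ext a
  have hinj : Function.Injective (antipode R (A := A)) :=
    Function.LeftInverse.injective (g := Sinv) (LinearMap.congr_fun hSinv1)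
  apply hinj
  have hSSinv (x : A) : antipode R (Sinv x) = x := LinearMap.congr_fun hSinv2 x
  simp only [LinearMap.comp_apply, ← (ℛ R a).eq, map_sum, TensorProduct.comm_tmul,
    LinearEquiv.coe_coe, map_tmul, mul'_apply, LinearMap.id_apply, antipode_mul_antidistrib,
    hSSinv, sum_antipode_mul_eq_algebraMap_counit, Algebra.linearMap_apply,
    Algebra.algebraMap_eq_smul_one, map_smul, antipode_one]

end HopfAlgebra

section Comodule

variable {R A M : Type*} [CommSemiring R] [Semiring A] [HopfAlgebra R A]
  [AddCommMonoid M] [Module R M]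

/-- In Sweedler notation: `m₍₀₎ ⊗ S⁻¹(m₍₂₎) m₍₁₎ = m ⊗ 1`. -/
theorem map_mul'_antipode_inverse_assoc_coaction (ρ : M →ₗ[R] M ⊗[R] A)
    (hcoassoc : map ρ LinearMap.id ∘ₗ ρ =
      (TensorProduct.assoc R M A A).symm.toLinearMap ∘ₗ map LinearMap.id comul ∘ₗ ρ)
    (hcounit : (TensorProduct.rid R M).toLinearMap ∘ₗ map LinearMap.id counit ∘ₗ ρ
      = LinearMap.id)
    (Sinv : A →ₗ[R] A) (hSinv1 : Sinv ∘ₗ HopfAlgebra.antipode R = LinearMap.id)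
    (hSinv2 : HopfAlgebra.antipode R ∘ₗ Sinv = LinearMap.id) (m : M) :
    map LinearMap.id
        (mul' R A ∘ₗ map Sinv LinearMap.id ∘ₗ (TensorProduct.comm R A A).toLinearMap)
      (TensorProduct.assoc R M A A (map ρ LinearMap.id (ρ m))) = m ⊗ₜ 1 := by
  have hcoassoc_m := LinearMap.congr_fun hcoassoc m
  have hcounit_m := LinearMap.congr_fun hcounit m
  simp only [LinearMap.comp_apply, LinearEquiv.coe_coe, LinearMap.id_apply] at hcoassoc_m hcounit_m
  have hunit : map LinearMap.id (Algebra.linearMap R A ∘ₗ counit) (ρ m) = m ⊗ₜ 1 := by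
    rw [← LinearMap.id_comp (LinearMap.id : M →ₗ[R] M), map_comp, LinearMap.comp_apply]
    conv_rhs => rw [← hcounit_m]
    induction map LinearMap.id counit (ρ m) using TensorProduct.induction_on with
    | zero => simp
    | tmul x r => simp [Algebra.algebraMap_eq_smul_one, TensorProduct.tmul_smul, smul_tmul']
    | add x y hx hy => simp [hx, hy, add_tmul]
  rw [hcoassoc_m, LinearEquiv.apply_symm_apply, ← LinearMap.comp_apply (map _ _), ← map_comp,
    LinearMap.id_comp, comp_assoc, comp_assoc,
    HopfAlgebra.mul'_comp_map_comp_comm_comp_comul_of_antipode_inverse Sinv hSinv1 hSinv2, hunit]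

end Comodule

section HopfGalois

variable {P B : Type} [Ring P] [CommRing B] [Algebra B P]

theorem sandwichMap_eq_sandwichMap_one_mul (q : P) (t : P ⊗[B] P) :
    sandwichMap P B q t = sandwichMap P B 1 (t * (1 ⊗ₜ q)) := by
  induction t using TensorProduct.induction_on with
  | zero => simp
  | tmul x y => simp [sandwichMap, mul_assoc]
  | add u v hu hv => rw [add_mul, map_add, map_add, hu, hv]

variable {k H : Type*} [CommRing k] [Semiring H] [Algebra k H] [Algebra k P] [Algebra k B]
  [IsScalarTower k B P]

theorem can_mul_one_tmul (ρ : P →ₐ[k] P ⊗[k] H) (can : P ⊗[B] P →ₗ[B] P ⊗[k] H)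
    (hcan : ∀ p p' : P, can (p ⊗ₜ[B] p') = (p ⊗ₜ[k] (1 : H)) * ρ p') (t : P ⊗[B] P) (q : P) :
    can (t * (1 ⊗ₜ q)) = can t * ρ q := by
  induction t using TensorProduct.induction_on with
  | zero => simp
  | tmul x y => rw [Algebra.TensorProduct.tmul_mul_tmul, mul_one, hcan, hcan, map_mul, mul_assoc]
  | add u v hu hv => rw [add_mul, map_add, map_add, add_mul, hu, hv]

theorem one_tmul_mul_eq_map_assoc (Sinv : H →ₗ[k] H) (h : H) (x : P ⊗[k] H) :
    ((1 : P) ⊗ₜ[k] Sinv h) * x =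
      map LinearMap.id
          (mul' k H ∘ₗ map Sinv LinearMap.id ∘ₗ (TensorProduct.comm k H H).toLinearMap)
        (TensorProduct.assoc k P H H (x ⊗ₜ h)) := by
  induction x using TensorProduct.induction_on with
  | zero => simp
  | tmul a b => simp
  | add u v hu hv => rw [mul_add, add_tmul, map_add, map_add, hu, hv]

theorem act_eq_sandwichMap_canInv (Sinv : H →ₗ[k] H) (ρ : P →ₐ[k] P ⊗[k] H)
    (can : P ⊗[B] P →ₗ[B] P ⊗[k] H)
    (hcan : ∀ p p' : P, can (p ⊗ₜ[B] p') = (p ⊗ₜ[k] (1 : H)) * ρ p')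
    (hbij : Function.Bijective can) (act : P ⊗[k] H →ₗ[k] P)
    (hact : ∀ (p : P) (h : H) (t : P ⊗[B] P),
      can t = (1 : P) ⊗ₜ[k] Sinv h → act (p ⊗ₜ[k] h) = sandwichMap P B p t)
    (u : P ⊗[k] H) :
    act u = sandwichMap P B 1 ((LinearEquiv.ofBijective can hbij).symm
      (map LinearMap.id
        (mul' k H ∘ₗ map Sinv LinearMap.id ∘ₗ (TensorProduct.comm k H H).toLinearMap)
        (TensorProduct.assoc k P H H (map ρ.toLinearMap LinearMap.id u)))) := by
  set canE := LinearEquiv.ofBijective can hbij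
  induction u using TensorProduct.induction_on with
  | zero => simp
  | tmul q h =>
    have hT : can (canE.symm (1 ⊗ₜ Sinv h)) = 1 ⊗ₜ Sinv h := canE.apply_symm_apply _
    rw [hact q h _ hT, sandwichMap_eq_sandwichMap_one_mul, map_tmul, AlgHom.toLinearMap_apply,
      LinearMap.id_apply, ← one_tmul_mul_eq_map_assoc]
    congr 1
    rw [LinearEquiv.eq_symm_apply, LinearEquiv.ofBijective_apply, can_mul_one_tmul ρ can hcan,
      hT]
  | add u v hu hv => simp only [map_add, hu, hv]

end HopfGalois

theorem statement13
    (Sinv : H →ₗ[k] H)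
    (hSinv1 : Sinv ∘ₗ HopfAlgebra.antipode (R := k) = LinearMap.id)
    (hSinv2 : HopfAlgebra.antipode (R := k) ∘ₗ Sinv = LinearMap.id)
    -- `ρ` makes `P` a right `H`-comodule algebra
    (ρ : P →ₐ[k] P ⊗[k] H)
    (hcoassoc : map ρ.toLinearMap LinearMap.id ∘ₗ ρ.toLinearMap =
      (TensorProduct.assoc k P H H).symm.toLinearMap
        ∘ₗ map LinearMap.id comul ∘ₗ ρ.toLinearMap)
    (hcounit : (TensorProduct.rid k P).toLinearMap
        ∘ₗ map LinearMap.id (counit (R := k) (A := H)) ∘ₗ ρ.toLinearMap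
      = LinearMap.id)
    -- the extension `B ⊆ P` is Hopf-Galois: the canonical map is bijective
    (can : P ⊗[B] P →ₗ[B] P ⊗[k] H)
    (hcan : ∀ p p' : P, can (p ⊗ₜ[B] p') = (p ⊗ₜ[k] (1 : H)) * ρ p')
    (hbij : Function.Bijective can)
    -- the action `p·h = (S⁻¹h)⁽²⁾ p (S⁻¹h)⁽¹⁾`, where
    -- `T(S⁻¹h) = (S⁻¹h)⁽¹⁾ ⊗_B (S⁻¹h)⁽²⁾ = can⁻¹(1 ⊗ S⁻¹h)`
    (act : P ⊗[k] H →ₗ[k] P)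
    (hact : ∀ (p : P) (h : H) (t : P ⊗[B] P),
      can t = (1 : P) ⊗ₜ[k] Sinv h → act (p ⊗ₜ[k] h) = sandwichMap P B p t) :
    -- `P` is stable: `p⁽⁰⁾·p⁽¹⁾ = p`
    act ∘ₗ ρ.toLinearMap = LinearMap.id := by
  ext p
  have hcan_one : (LinearEquiv.ofBijective can hbij).symm (p ⊗ₜ 1) = p ⊗ₜ 1 := by
    rw [LinearEquiv.symm_apply_eq, LinearEquiv.ofBijective_apply, hcan, map_one, mul_one]
  rw [LinearMap.comp_apply, act_eq_sandwichMap_canInv Sinv ρ can hcan hbij act hact,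
    map_mul'_antipode_inverse_assoc_coaction ρ.toLinearMap hcoassoc hcounit Sinv hSinv1 hSinv2,
    hcan_one]
  simp [sandwichMap]
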